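/- Let φ be a satisfiable propositional formula on x₁,…,xₙ whose M-evaluation coincides, under every M-valuation, with the M-evaluation of its Blake canonical form B(φ), the disjunction of all prime implicants of the Boolean function of φ. Then for every propositional formula ψ that is binary-equivalent to φ and for every M-valuation v, |⟦φ⟧_v| ≥ |⟦ψ⟧_v|. -/

import Mathlib

/-- Propositional formulas over `n` variables, built from `¬`, `∧`, `∨`. -/
inductive PropForm (n : ℕ) : Type where
  | var : Fin n → PropForm n
  | neg : PropForm n → PropForm n
  | conj : PropForm n → PropForm n → PropForm n
  | disj : PropForm n → PropForm n → PropForm n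

namespace PropForm

/-- The multiple-valued semantics `M` over the integers:
`∧` is `min`, `∨` is `max`, `¬` is integer negation. -/
def evalM {n : ℕ} (v : Fin n → ℤ) : PropForm n → ℤ
  | var i => v i
  | neg φ => -(evalM v φ)
  | conj φ ψ => min (evalM v φ) (evalM v ψ)
  | disj φ ψ => max (evalM v φ) (evalM v ψ)

/-- The binary semantics `B₂` over `Bool`. -/
def evalB {n : ℕ} (b : Fin n → Bool) : PropForm n → Bool
  | var i => b i
  | neg φ => !(evalB b φ)
  | conj φ ψ => evalB b φ && evalB b ψ
  | disj φ ψ => evalB b φ || evalB b ψ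

end PropForm

/-- A literal: a variable together with a polarity (`true` = positive). -/
abbrev Lit (n : ℕ) := Fin n × Bool

/-- `M`-value of a literal under a valuation. -/
def litValM {n : ℕ} (v : Fin n → ℤ) (l : Lit n) : ℤ :=
  if l.2 then v l.1 else -(v l.1)

/-- Binary value of a literal under a binary valuation. -/
def litValB {n : ℕ} (b : Fin n → Bool) (l : Lit n) : Bool :=
  if l.2 then b l.1 else !(b l.1)

/-- `M`-value of a conjunctive term (a list of literals), the minimum of the
literal values (for nonempty terms; the value on `[]` is a dummy). -/
def Term.evalM {n : ℕ} (v : Fin n → ℤ) : List (Lit n) → ℤ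
  | [] => 0
  | [l] => litValM v l
  | l :: ls => min (litValM v l) (Term.evalM v ls)

/-- Binary value of a conjunctive term: the conjunction of its literal values. -/
def Term.evalB {n : ℕ} (b : Fin n → Bool) (t : List (Lit n)) : Bool :=
  t.all (litValB b)

/-- `M`-value of a DNF (a list of conjunctive terms), the maximum of the
term values (for nonempty DNFs; the value on `[]` is a dummy). -/
def DNF.evalM {n : ℕ} (v : Fin n → ℤ) : List (List (Lit n)) → ℤ
  | [] => 0
  | [t] => Term.evalM v t
  | t :: ts => max (Term.evalM v t) (DNF.evalM v ts)

/-- A term is contradictory if it contains both `x` and `¬x` for some variable. -/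
def Contra {n : ℕ} (t : List (Lit n)) : Prop :=
  ∃ i : Fin n, ((i, true) : Lit n) ∈ t ∧ ((i, false) : Lit n) ∈ t

/-- A conjunctive term over distinct variables which is a binary implicant of `φ`. -/
def IsImplicant {n : ℕ} (t : List (Lit n)) (φ : PropForm n) : Prop :=
  t ≠ [] ∧ (t.map Prod.fst).Nodup ∧
    ∀ b : Fin n → Bool, Term.evalB b t = true → PropForm.evalB b φ = true

/-- A prime implicant: an implicant none of whose proper subterms is an implicant. -/
def IsPrimeImplicant {n : ℕ} (t : List (Lit n)) (φ : PropForm n) : Prop :=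
  IsImplicant t φ ∧
    ∀ s : List (Lit n), s.toFinset ⊂ t.toFinset → ¬ IsImplicant s φ


/-! At a threshold `c > 0` the semantics `M` behaves like Kleene's three-valued logic: call a
literal true if its value is `≥ c` and false if it is `≤ -c`. A formula of value `≥ c`
(resp. `≤ -c`) is then true (resp. false) under every binary completion of these literals.

Put `c = |⟦ψ⟧ᵥ|`. If `⟦ψ⟧ᵥ = c > 0`, the literals of value `≥ c` form an implicant of `ψ`, hence
of `φ`; it contains a prime implicant, which occurs in `B(φ)` and has value `≥ c`, so
`⟦φ⟧ᵥ = ⟦B(φ)⟧ᵥ ≥ c`. If `⟦ψ⟧ᵥ = -c < 0`, every prime implicant of `φ` contains a literal of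
value `≤ -c`: otherwise it could be satisfied together with all literals of value `≥ c`,
making `φ` true where `ψ` is false. Hence `⟦φ⟧ᵥ = ⟦B(φ)⟧ᵥ ≤ -c`. -/

section

variable {n : ℕ}

theorem litValM_flip (v : Fin n → ℤ) (l : Lit n) :
    litValM v (l.1, !l.2) = -litValM v l := by
  obtain ⟨i, _ | _⟩ := l <;> simp [litValM]

theorem litValM_ne_zero {v : Fin n → ℤ} (hv : ∀ i, v i ≠ 0) (l : Lit n) : litValM v l ≠ 0 := by
  obtain ⟨i, _ | _⟩ := l <;> simp [litValM, hv i]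

theorem litValB_eq_true_of_litValM_pos {v : Fin n → ℤ} {l : Lit n} (h : 0 < litValM v l) :
    litValB (fun i => decide (0 < v i)) l = true := by
  obtain ⟨i, _ | _⟩ := l <;> simp_all [litValM, litValB]
  omega

theorem not_contra_of_nodup {t : List (Lit n)} (ht : (t.map Prod.fst).Nodup) : ¬ Contra t :=
  fun ⟨i, hT, hF⟩ => by simpa using List.inj_on_of_nodup_map ht hT hF rfl

namespace PropForm

theorem exists_evalM_eq_litValM (v : Fin n → ℤ) : ∀ ψ : PropForm n, ∃ l, ψ.evalM v = litValM v l
  | var i => ⟨(i, true), rfl⟩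
  | neg ψ => by
    obtain ⟨l, hl⟩ := exists_evalM_eq_litValM v ψ
    exact ⟨(l.1, !l.2), by rw [litValM_flip, evalM, hl]⟩
  | conj ψ χ => by
    rcases min_choice (ψ.evalM v) (χ.evalM v) with h | h <;> rw [evalM, h] <;>
      apply exists_evalM_eq_litValM
  | disj ψ χ => by
    rcases max_choice (ψ.evalM v) (χ.evalM v) with h | h <;> rw [evalM, h] <;>
      apply exists_evalM_eq_litValM

theorem evalM_ne_zero {v : Fin n → ℤ} (hv : ∀ i, v i ≠ 0) (ψ : PropForm n) : ψ.evalM v ≠ 0 := by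
  obtain ⟨l, hl⟩ := exists_evalM_eq_litValM v ψ
  exact hl ▸ litValM_ne_zero hv l

end PropForm

def SatisfiesAbove (v : Fin n → ℤ) (c : ℤ) (b : Fin n → Bool) : Prop :=
  ∀ l, c ≤ litValM v l → litValB b l = true

theorem PropForm.evalB_of_satisfiesAbove {v : Fin n → ℤ} {c : ℤ} {b : Fin n → Bool}
    (hb : SatisfiesAbove v c b) (ψ : PropForm n) :
    (c ≤ ψ.evalM v → ψ.evalB b = true) ∧ (ψ.evalM v ≤ -c → ψ.evalB b = false) := by
  induction ψ with
  | var i =>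
    refine ⟨fun h => by simpa [litValB, evalB] using hb (i, true) h, fun h => ?_⟩
    simpa [litValB, evalB] using hb (i, false) (by simp [litValM, evalM] at h ⊢; omega)
  | neg ψ ih =>
    simp only [evalM, evalB, Bool.not_eq_true', Bool.not_eq_false']
    exact ⟨fun h => ih.2 (by omega), fun h => ih.1 (by omega)⟩
  | conj ψ χ ihψ ihχ =>
    simp only [evalM, evalB, le_min_iff, min_le_iff, Bool.and_eq_true, Bool.and_eq_false_iff]
    exact ⟨fun h => ⟨ihψ.1 h.1, ihχ.1 h.2⟩, Or.imp ihψ.2 ihχ.2⟩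
  | disj ψ χ ihψ ihχ =>
    simp only [evalM, evalB, le_max_iff, max_le_iff, Bool.or_eq_true, Bool.or_eq_false_iff]
    exact ⟨Or.imp ihψ.1 ihχ.1, fun h => ⟨ihψ.2 h.1, ihχ.2 h.2⟩⟩

namespace Term

theorem evalB_eq_true_iff {b : Fin n → Bool} {t : List (Lit n)} :
    evalB b t = true ↔ ∀ l ∈ t, litValB b l = true := by
  simp [evalB]

theorem evalM_le_litValM (v : Fin n → ℤ) {t : List (Lit n)} {l : Lit n} (hl : l ∈ t) :
    evalM v t ≤ litValM v l := by
  fun_induction evalM v t <;> grind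

theorem le_evalM {v : Fin n → ℤ} {c : ℤ} {t : List (Lit n)} (ht : t ≠ [])
    (h : ∀ l ∈ t, c ≤ litValM v l) : c ≤ evalM v t := by
  fun_induction evalM v t <;> simp_all

noncomputable def atLeast (v : Fin n → ℤ) (c : ℤ) : List (Lit n) :=
  (Finset.univ.filter fun l => c ≤ litValM v l).toList

theorem mem_atLeast {v : Fin n → ℤ} {c : ℤ} {l : Lit n} : l ∈ atLeast v c ↔ c ≤ litValM v l := by
  simp [atLeast]

theorem nodup_map_fst_atLeast {v : Fin n → ℤ} {c : ℤ} (hc : 0 < c) :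
    ((atLeast v c).map Prod.fst).Nodup := by
  refine (Finset.nodup_toList _).map_on fun l hl l' hl' hfst => ?_
  rw [mem_atLeast] at hl hl'
  obtain ⟨i, p⟩ := l
  obtain ⟨j, q⟩ := l'
  obtain rfl : i = j := hfst
  cases p <;> cases q <;> simp_all [litValM] <;> omega

theorem isImplicant_atLeast {φ : PropForm n} {v : Fin n → ℤ} {c : ℤ} (hc : 0 < c)
    {l₀ : Lit n} (hl₀ : c ≤ litValM v l₀)
    (hφ : ∀ b, SatisfiesAbove v c b → φ.evalB b = true) : IsImplicant (atLeast v c) φ :=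
  ⟨List.ne_nil_of_mem (mem_atLeast.2 hl₀), nodup_map_fst_atLeast hc,
    fun b hb => hφ b fun l hl => evalB_eq_true_iff.1 hb l (mem_atLeast.2 hl)⟩

def override (t : List (Lit n)) (b : Fin n → Bool) : Fin n → Bool := fun i =>
  if ((i, true) : Lit n) ∈ t then true else if ((i, false) : Lit n) ∈ t then false else b i

theorem evalB_override_self {t : List (Lit n)} (ht : ¬ Contra t) (b : Fin n → Bool) :
    evalB (override t b) t = true := by
  refine evalB_eq_true_iff.2 fun ⟨i, p⟩ hl => ?_
  cases p
  · have hT : ((i, true) : Lit n) ∉ t := fun hT => ht ⟨i, hT, hl⟩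
    simp [litValB, override, hT, hl]
  · simp [litValB, override, hl]

theorem litValB_override {t : List (Lit n)} {b : Fin n → Bool} {l : Lit n}
    (hl : ((l.1, !l.2) : Lit n) ∉ t) (hb : litValB b l = true) :
    litValB (override t b) l = true := by
  obtain ⟨i, _ | _⟩ := l <;> by_cases hT : ((i, true) : Lit n) ∈ t <;>
    by_cases hF : ((i, false) : Lit n) ∈ t <;> simp_all [litValB, override]

end Term

theorem exists_isPrimeImplicant_subset {φ : PropForm n} {t : List (Lit n)}
    (ht : IsImplicant t φ) : ∃ p, IsPrimeImplicant p φ ∧ p.toFinset ⊆ t.toFinset := by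
  induction hk : t.toFinset.card using Nat.strong_induction_on generalizing t with
  | _ k ih =>
    by_cases hprime : ∀ s : List (Lit n), s.toFinset ⊂ t.toFinset → ¬ IsImplicant s φ
    · exact ⟨t, ⟨ht, hprime⟩, subset_rfl⟩
    · push Not at hprime
      obtain ⟨s, hst, hs⟩ := hprime
      obtain ⟨p, hp, hps⟩ := ih _ (hk ▸ Finset.card_lt_card hst) hs rfl
      exact ⟨p, hp, hps.trans hst.subset⟩

theorem exists_litValM_le_of_isImplicant {φ : PropForm n} {t : List (Lit n)}
    (ht : IsImplicant t φ) {v : Fin n → ℤ} {c : ℤ} (hc : 0 < c)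
    (hφ : ∀ b, SatisfiesAbove v c b → φ.evalB b = false) : ∃ l ∈ t, litValM v l ≤ -c := by
  by_contra! hlt
  obtain ⟨-, hnd, himp⟩ := ht
  set b := Term.override t fun i => decide (0 < v i)
  have habove : SatisfiesAbove v c b := by
    refine fun l hl => Term.litValB_override (fun hflip => ?_)
      (litValB_eq_true_of_litValM_pos (by omega))
    have := hlt _ hflip
    rw [litValM_flip] at this
    omega
  have := himp b (Term.evalB_override_self (not_contra_of_nodup hnd) _)
  simp [hφ b habove] at this

namespace DNF

theorem term_evalM_le (v : Fin n → ℤ) {B : List (List (Lit n))} {t : List (Lit n)} (ht : t ∈ B) :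
    Term.evalM v t ≤ evalM v B := by
  fun_induction evalM v B <;> grind

theorem evalM_le {v : Fin n → ℤ} {c : ℤ} {B : List (List (Lit n))} (hB : B ≠ [])
    (h : ∀ t ∈ B, Term.evalM v t ≤ c) : evalM v B ≤ c := by
  fun_induction evalM v B <;> simp_all

end DNF

theorem le_dnf_evalM_of_satisfiesAbove {φ : PropForm n} {B : List (List (Lit n))}
    (hBprime : ∀ t ∈ B, IsPrimeImplicant t φ)
    (hBall : ∀ t : List (Lit n), IsPrimeImplicant t φ → ∃ t' ∈ B, t'.toFinset = t.toFinset)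
    {v : Fin n → ℤ} {c : ℤ} (hc : 0 < c) {l₀ : Lit n} (hl₀ : c ≤ litValM v l₀)
    (hφ : ∀ b, SatisfiesAbove v c b → φ.evalB b = true) : c ≤ DNF.evalM v B := by
  obtain ⟨p, hp, hpsub⟩ :=
    exists_isPrimeImplicant_subset (Term.isImplicant_atLeast hc hl₀ hφ)
  obtain ⟨t, htB, htp⟩ := hBall p hp
  have hct : c ≤ Term.evalM v t := Term.le_evalM (hBprime t htB).1.1 fun l hl =>
    Term.mem_atLeast.1 (by simpa using hpsub (htp ▸ List.mem_toFinset.2 hl))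
  exact hct.trans (DNF.term_evalM_le v htB)

theorem dnf_evalM_le_of_satisfiesAbove {φ : PropForm n} {B : List (List (Lit n))}
    (hB : B ≠ []) (hBimp : ∀ t ∈ B, IsImplicant t φ) {v : Fin n → ℤ} {c : ℤ} (hc : 0 < c)
    (hφ : ∀ b, SatisfiesAbove v c b → φ.evalB b = false) : DNF.evalM v B ≤ -c := by
  refine DNF.evalM_le hB fun t ht => ?_
  obtain ⟨l, hl, hlc⟩ := exists_litValM_le_of_isImplicant (hBimp t ht) hc hφ
  exact (Term.evalM_le_litValM v hl).trans hlc

end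

theorem abs_ge_of_BCF_general {n : ℕ} (φ : PropForm n)
    (B : List (List (Lit n)))
    (hBprime : ∀ t ∈ B, IsPrimeImplicant t φ)
    (hBall : ∀ t : List (Lit n), IsPrimeImplicant t φ → ∃ t' ∈ B, t'.toFinset = t.toFinset)
    (hBeq : ∀ v : Fin n → ℤ, (∀ i, v i ≠ 0) → PropForm.evalM v φ = DNF.evalM v B) :
    ∀ ψ : PropForm n, (∀ b : Fin n → Bool, PropForm.evalB b φ = PropForm.evalB b ψ) →
      ∀ v : Fin n → ℤ, (∀ i, v i ≠ 0) →
        |PropForm.evalM v ψ| ≤ |PropForm.evalM v φ| := by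
  intro ψ hψ v hv
  have hB := hBeq v hv
  rcases lt_trichotomy (ψ.evalM v) 0 with hneg | hzero | hpos
  · have hBne : B ≠ [] := by
      rintro rfl
      exact φ.evalM_ne_zero hv hB -- the empty DNF has the dummy value `0`
    have hle : φ.evalM v ≤ ψ.evalM v := by
      simpa [hB] using dnf_evalM_le_of_satisfiesAbove hBne (fun t ht => (hBprime t ht).1)
        (neg_pos.2 hneg) fun b hb =>
          (hψ b).trans ((ψ.evalB_of_satisfiesAbove hb).2 (neg_neg _).ge)
    rw [abs_of_neg hneg, abs_of_neg (hle.trans_lt hneg)]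
    exact neg_le_neg hle
  · simp [hzero]
  · obtain ⟨l₀, hl₀⟩ := ψ.exists_evalM_eq_litValM v
    have hle : ψ.evalM v ≤ φ.evalM v :=
      hB ▸ le_dnf_evalM_of_satisfiesAbove hBprime hBall hpos hl₀.le fun b hb =>
        (hψ b).trans ((ψ.evalB_of_satisfiesAbove hb).1 le_rfl)
    rw [abs_of_pos hpos, abs_of_pos (hpos.trans_le hle)]
    exact hle

/-- if the `M`-evaluation of a satisfiable `φ` coincides with that of
its Blake canonical form `B(φ)` (a DNF whose terms are prime implicants of `φ` and
which contains every prime implicant of `φ`), then `|⟦φ⟧ᵥ| ≥ |⟦ψ⟧ᵥ|` for every `ψ`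
binary-equivalent to `φ` and every `M`-valuation `v`. -/
theorem abs_ge_of_BCF {n : ℕ} (φ : PropForm n)
    (hsat : ∃ b : Fin n → Bool, PropForm.evalB b φ = true)
    (B : List (List (Lit n)))
    (hBprime : ∀ t ∈ B, IsPrimeImplicant t φ)
    (hBall : ∀ t : List (Lit n), IsPrimeImplicant t φ → ∃ t' ∈ B, t'.toFinset = t.toFinset)
    (hBeq : ∀ v : Fin n → ℤ, (∀ i, v i ≠ 0) → PropForm.evalM v φ = DNF.evalM v B) :
    ∀ ψ : PropForm n, (∀ b : Fin n → Bool, PropForm.evalB b φ = PropForm.evalB b ψ) →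
      ∀ v : Fin n → ℤ, (∀ i, v i ≠ 0) →
        |PropForm.evalM v ψ| ≤ |PropForm.evalM v φ| :=
  abs_ge_of_BCF_general φ B hBprime hBall hBeq
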